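/- Let N = (S, C, R) be a deficiency-one chemical reaction network which, equipped with a PL-RDK kinetics with T-matrix T, admits a positive equilibrium. Suppose the network has zero reactant deficiency (so the reactant matrix Y_res is injective on the reactant subspace), has two nonterminal complexes y, y' ∈ C differing only in species X_j, and the map ŷ := T ∘ Y_res^{-1} : R → Im T is given by ŷ(X_1, ..., X_j, ..., X_m) = (a_1 X_1, ..., a_j X_j, ..., a_m X_m) with all a_i ≠ 0. Then the system is PL-RLK (the columns of T are linearly independent) and has absolute concentration robustness in X_j. -/

import Mathlib

open scoped BigOperators Classical

/-- A chemical reaction network (CRN) on a finite species set `S`: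
complexes are non-negative vectors in `ℝ^S`, reactions are pairs of complexes,
no reaction is a self-loop, and every complex occurs in some reaction. -/
structure CRN (S : Type*) [Fintype S] where
  complexes : Finset (S → ℝ)
  reactions : Finset ((S → ℝ) × (S → ℝ))
  complexes_nonneg : ∀ y ∈ complexes, ∀ i, 0 ≤ y i
  mem_source : ∀ r ∈ reactions, r.1 ∈ complexes
  mem_target : ∀ r ∈ reactions, r.2 ∈ complexes
  ne_of_mem : ∀ r ∈ reactions, r.1 ≠ r.2
  cover : ∀ y ∈ complexes, ∃ y', (y, y') ∈ reactions ∨ (y', y) ∈ reactions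

namespace CRN

variable {S : Type*} [Fintype S] (N : CRN S)

/-- One-step reaction relation on complexes. -/
def step (y y' : S → ℝ) : Prop := (y, y') ∈ N.reactions

/-- Reachability along directed reactions. -/
def reach : (S → ℝ) → (S → ℝ) → Prop := Relation.ReflTransGen N.step

/-- A complex is terminal iff it belongs to a terminal strong linkage class,
i.e. everything reachable from it can reach it back. -/
def IsTerminal (y : S → ℝ) : Prop :=
  y ∈ N.complexes ∧ ∀ y', N.reach y y' → N.reach y' y

/-- A nonterminal complex. -/
def Nonterminal (y : S → ℝ) : Prop := y ∈ N.complexes ∧ ¬ N.IsTerminal y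

/-- The set of terminal strong linkage classes. -/
def tslc : Set (Set (S → ℝ)) :=
  {L | ∃ y, N.IsTerminal y ∧ L = {y' | N.reach y y' ∧ N.reach y' y}}

/-- The number `t` of terminal strong linkage classes. -/
noncomputable def numTSLC : ℕ := Nat.card N.tslc

/-- Undirected connectivity (for linkage classes). -/
def linked : (S → ℝ) → (S → ℝ) → Prop :=
  Relation.ReflTransGen (fun a b => (a, b) ∈ N.reactions ∨ (b, a) ∈ N.reactions)

/-- The set of linkage classes (connected components of the reaction digraph). -/
def linkageClasses : Set (Set (S → ℝ)) :=
  {L | ∃ y ∈ N.complexes, L = {y' | y' ∈ N.complexes ∧ N.linked y y'}}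

/-- The number `ℓ` of linkage classes. -/
noncomputable def numLinkageClasses : ℕ := Nat.card N.linkageClasses

/-- The stoichiometric subspace `S = span{y' - y : y → y'}`. -/
def stoichSubspace : Submodule ℝ (S → ℝ) :=
  Submodule.span ℝ {v | ∃ r ∈ N.reactions, v = r.2 - r.1}

/-- The rank `s` of the network. -/
noncomputable def rank : ℕ := Module.finrank ℝ N.stoichSubspace

/-- The deficiency `δ = n - ℓ - s`. -/
noncomputable def deficiency : ℤ :=
  (N.complexes.card : ℤ) - N.numLinkageClasses - N.rank

/-- The map of complexes `Y : ℝ^C → ℝ^S`, sending `ω_y ↦ y`. -/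
noncomputable def mapY : (↥N.complexes → ℝ) →ₗ[ℝ] (S → ℝ) :=
  ∑ y : ↥N.complexes, (LinearMap.proj y).smulRight (y : S → ℝ)

/-- The incidence map `I_a : ℝ^R → ℝ^C`, sending `ω_{y→y'} ↦ ω_{y'} - ω_y`. -/
noncomputable def incidence : (↥N.reactions → ℝ) →ₗ[ℝ] (↥N.complexes → ℝ) :=
  ∑ r : ↥N.reactions,
    (LinearMap.proj r).smulRight
      (Pi.single (⟨r.1.2, N.mem_target r.1 r.2⟩ : ↥N.complexes) 1
        - Pi.single (⟨r.1.1, N.mem_source r.1 r.2⟩ : ↥N.complexes) 1)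

/-- The Laplacian map `A_k x = Σ_{y→y'} k_{y→y'} x_y (ω_{y'} - ω_y)`. -/
noncomputable def laplacian (k : ↥N.reactions → ℝ) :
    (↥N.complexes → ℝ) →ₗ[ℝ] (↥N.complexes → ℝ) :=
  ∑ r : ↥N.reactions, k r •
    ((LinearMap.proj (⟨r.1.1, N.mem_source r.1 r.2⟩ : ↥N.complexes)).smulRight
      (Pi.single (⟨r.1.2, N.mem_target r.1 r.2⟩ : ↥N.complexes) 1
        - Pi.single (⟨r.1.1, N.mem_source r.1 r.2⟩ : ↥N.complexes) 1))

/-- A positive equilibrium of the PL-RDK system with rate constants `k` and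
kinetic-order assignment (T-matrix) `T`. -/
def IsPosEquilibrium (k : ↥N.reactions → ℝ) (T : (S → ℝ) → (S → ℝ)) (c : S → ℝ) : Prop :=
  (∀ i, 0 < c i) ∧
    ∑ r : ↥N.reactions, (k r * ∏ i, (c i) ^ (T r.1.1 i)) • ((r.1.2 : S → ℝ) - r.1.1) = 0

/-- The set of reactant complexes. -/
def reactantSet : Set (S → ℝ) := {y | ∃ y', (y, y') ∈ N.reactions}

/-- The reactant subspace `R = Im Y_res`. -/
def reactantSubspace : Submodule ℝ (S → ℝ) := Submodule.span ℝ N.reactantSet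

/-- The reactant deficiency `δ_ρ = n_r - q`. -/
noncomputable def reactantDeficiency : ℤ :=
  (Nat.card N.reactantSet : ℤ) - Module.finrank ℝ N.reactantSubspace

end CRN

/-!
Write `x_c z = ∏ i, c i ^ T z i` for a positive equilibrium `c`. Then `A_k x_c` lies in
`ker Y ∩ Im I_a`, whose dimension is at most the deficiency `1`. A vector in the kernel of the
Laplacian vanishes on nonterminal complexes; as `x_{c'}` is positive at `y`, `A_k x_{c'} ≠ 0`, so
`A_k x_c = μ A_k x_{c'}` and `x_c = μ x_{c'}` on nonterminal complexes. Comparing `y` and `y'`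
and taking logarithms gives `(T y - T y') ⬝ (log c - log c') = 0`, and `T y - T y'` is a nonzero
multiple of `e_j`. Linear independence holds because zero reactant deficiency makes the reactant
complexes independent and `T` acts on them as the invertible diagonal map `diag a`.
-/

open Finset Matrix

theorem LinearMap.finrank_map_add_finrank_ker_inf {K V W : Type*} [DivisionRing K]
    [AddCommGroup V] [Module K V] [FiniteDimensional K V] [AddCommGroup W] [Module K W]
    (f : V →ₗ[K] W) (p : Submodule K V) :
    Module.finrank K (p.map f) + Module.finrank K ↥(LinearMap.ker f ⊓ p) =
      Module.finrank K p := by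
  have h := (f.domRestrict p).finrank_range_add_finrank_ker
  rwa [LinearMap.range_domRestrict, LinearMap.ker_domRestrict,
    show (LinearMap.ker f).comap p.subtype = (LinearMap.ker f ⊓ p).comap p.subtype by
      ext v; simp,
    (Submodule.comapSubtypeEquivOfLe inf_le_right).finrank_eq] at h

lemma eq_of_prod_rpow_eq_mul_prod_rpow {ι : Type*} [Fintype ι] {c c' t t' : ι → ℝ}
    (hc : ∀ i, 0 < c i) (hc' : ∀ i, 0 < c' i) {μ : ℝ}
    (h : ∏ i, c i ^ t i = μ * ∏ i, c' i ^ t i)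
    (h' : ∏ i, c i ^ t' i = μ * ∏ i, c' i ^ t' i)
    {j : ι} (htj : t j ≠ t' j) (ht : ∀ i ≠ j, t i = t' i) : c j = c' j := by
  have log_prod_rpow : ∀ d s : ι → ℝ, (∀ i, 0 < d i) →
      Real.log (∏ i, d i ^ s i) = ∑ i, s i * Real.log (d i) := fun d s hd => by
    rw [Real.log_prod fun i _ => (Real.rpow_pos_of_pos (hd i) _).ne']
    exact sum_congr rfl fun i _ => Real.log_rpow (hd i) _
  have hμ : 0 < μ := pos_of_mul_pos_left (h ▸ prod_pos fun i _ => Real.rpow_pos_of_pos (hc i) _)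
    (prod_pos fun i _ => Real.rpow_pos_of_pos (hc' i) _).le
  have hlog : ∀ s : ι → ℝ, ∏ i, c i ^ s i = μ * ∏ i, c' i ^ s i →
      ∑ i, s i * (Real.log (c i) - Real.log (c' i)) = Real.log μ := fun s hs => by
    have := congrArg Real.log hs
    rw [Real.log_mul hμ.ne' (prod_pos fun i _ => Real.rpow_pos_of_pos (hc' i) _).ne',
      log_prod_rpow c s hc, log_prod_rpow c' s hc'] at this
    simp only [mul_sub, sum_sub_distrib]
    linarith
  have hdiff : ∑ i, (t i - t' i) * (Real.log (c i) - Real.log (c' i)) = 0 := by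
    simp only [sub_mul, sum_sub_distrib, hlog t h, hlog t' h', sub_self]
  rw [sum_eq_single j (fun i _ hi => by rw [ht i hi, sub_self, zero_mul]) (by simp)] at hdiff
  have hlogj := sub_eq_zero.1 ((mul_eq_zero.1 hdiff).resolve_left (sub_ne_zero.2 htj))
  exact Real.log_injOn_pos (hc j) (hc' j) hlogj

namespace CRN

variable {S : Type*} [Fintype S] (N : CRN S)

def source (r : N.reactions) : N.complexes := ⟨r.1.1, N.mem_source r.1 r.2⟩

def target (r : N.reactions) : N.complexes := ⟨r.1.2, N.mem_target r.1 r.2⟩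

lemma step_source_target (r : N.reactions) : N.step (N.source r) (N.target r) := r.2

lemma mapY_single (z : N.complexes) : N.mapY (Pi.single z 1) = z := by
  simp [mapY, LinearMap.sum_apply, Pi.single_apply]

lemma incidence_apply (w : N.reactions → ℝ) :
    N.incidence w = ∑ r, w r • (Pi.single (N.target r) 1 - Pi.single (N.source r) 1) := by
  simp [incidence, LinearMap.sum_apply, source, target]

lemma laplacian_apply (k : N.reactions → ℝ) (x : N.complexes → ℝ) :
    N.laplacian k x = ∑ r, (k r * x (N.source r)) •
      (Pi.single (N.target r) 1 - Pi.single (N.source r) 1) := by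
  simp [laplacian, LinearMap.sum_apply, source, target, smul_smul]

lemma laplacian_mem_range_incidence (k : N.reactions → ℝ) (x : N.complexes → ℝ) :
    N.laplacian k x ∈ LinearMap.range N.incidence :=
  ⟨_, (N.incidence_apply _).trans (N.laplacian_apply k x).symm⟩

lemma mapY_laplacian (k : N.reactions → ℝ) (x : N.complexes → ℝ) :
    N.mapY (N.laplacian k x) =
      ∑ r, (k r * x (N.source r)) • ((N.target r : S → ℝ) - N.source r) := by
  simp only [laplacian_apply, map_sum, map_smul, map_sub, mapY_single]

lemma dotProduct_laplacian (k : N.reactions → ℝ) (x χ : N.complexes → ℝ) :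
    χ ⬝ᵥ N.laplacian k x =
      ∑ r, k r * x (N.source r) * (χ (N.target r) - χ (N.source r)) := by
  simp only [laplacian_apply, dotProduct_sum, dotProduct_smul, dotProduct_sub, dotProduct_single,
    mul_one, smul_eq_mul]

section LaplacianKernel

variable {N} {k : N.reactions → ℝ} {x : N.complexes → ℝ}

lemma flux_eq_zero_of_forall_nonpos (hx : N.laplacian k x = 0) {χ : N.complexes → ℝ}
    (hχ : ∀ r, k r * x (N.source r) * (χ (N.target r) - χ (N.source r)) ≤ 0)
    (r : N.reactions) :
    k r * x (N.source r) * (χ (N.target r) - χ (N.source r)) = 0 := by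
  have hsum := N.dotProduct_laplacian k x χ
  rw [hx, dotProduct_zero, eq_comm, sum_eq_zero_iff_of_nonpos fun r _ => hχ r] at hsum
  exact hsum r (mem_univ r)

lemma flux_eq_zero_of_forall_nonneg (hx : N.laplacian k x = 0) {χ : N.complexes → ℝ}
    (hχ : ∀ r, 0 ≤ k r * x (N.source r) * (χ (N.target r) - χ (N.source r)))
    (r : N.reactions) :
    k r * x (N.source r) * (χ (N.target r) - χ (N.source r)) = 0 := by
  have hsum := N.dotProduct_laplacian k x χ
  rw [hx, dotProduct_zero, eq_comm, sum_eq_zero_iff_of_nonneg fun r _ => hχ r] at hsum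
  exact hsum r (mem_univ r)

/-- Pairing with the indicator of `{0 < x}`: every term is nonpositive, hence zero. -/
lemma flux_pos_indicator_eq_zero (hk : ∀ r, 0 < k r) (hx : N.laplacian k x = 0)
    (r : N.reactions) :
    k r * x (N.source r) *
      ((if 0 < x (N.target r) then 1 else 0) - if 0 < x (N.source r) then 1 else 0) = 0 := by
  refine flux_eq_zero_of_forall_nonpos hx (χ := fun z => if 0 < x z then 1 else 0) (fun r => ?_) r
  have := hk r
  split_ifs with ht hs hs <;> nlinarith

lemma pos_target_of_pos_source (hk : ∀ r, 0 < k r) (hx : N.laplacian k x = 0)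
    {r : N.reactions} (hs : 0 < x (N.source r)) : 0 < x (N.target r) := by
  by_contra ht
  have := flux_pos_indicator_eq_zero hk hx r
  rw [if_neg ht, if_pos hs] at this
  nlinarith [hk r]

lemma nonneg_source_of_pos_target (hk : ∀ r, 0 < k r) (hx : N.laplacian k x = 0)
    {r : N.reactions} (ht : 0 < x (N.target r)) : 0 ≤ x (N.source r) := by
  by_contra hs
  have := flux_pos_indicator_eq_zero hk hx r
  rw [if_pos ht, if_neg (by linarith)] at this
  nlinarith [hk r]

/-- Pairing with the indicator of the positive complexes that cannot reach `y`: every term is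
nonnegative, hence zero. -/
lemma reach_target_of_pos_source (hk : ∀ r, 0 < k r) (hx : N.laplacian k x = 0) {y : S → ℝ}
    {r : N.reactions} (hs : 0 < x (N.source r)) (hy : N.reach (N.source r) y) :
    N.reach (N.target r) y := by
  let χ : N.complexes → ℝ := fun z => if 0 < x z ∧ ¬ N.reach z y then 1 else 0
  have hχ : ∀ r, 0 ≤ k r * x (N.source r) * (χ (N.target r) - χ (N.source r)) := by
    intro r
    by_cases hsr : 0 < x (N.source r) ∧ ¬ N.reach (N.source r) y
    · have htr : 0 < x (N.target r) ∧ ¬ N.reach (N.target r) y :=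
        ⟨pos_target_of_pos_source hk hx hsr.1,
          fun h => hsr.2 (Relation.ReflTransGen.head (N.step_source_target r) h)⟩
      simp [χ, hsr, htr]
    · by_cases htr : 0 < x (N.target r) ∧ ¬ N.reach (N.target r) y
      · simp only [χ, if_pos htr, if_neg hsr, sub_zero, mul_one]
        exact mul_nonneg (hk r).le (nonneg_source_of_pos_target hk hx htr.1)
      · simp [χ, hsr, htr]
  by_contra hty
  have := flux_eq_zero_of_forall_nonneg hx hχ r
  have hsχ : ¬ (0 < x (N.source r) ∧ ¬ N.reach (N.source r) y) := fun h => h.2 hy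
  simp only [χ, if_pos (And.intro (pos_target_of_pos_source hk hx hs) hty), if_neg hsχ,
    sub_zero, mul_one] at this
  nlinarith [hk r]

lemma isTerminal_of_laplacian_eq_zero (hk : ∀ r, 0 < k r) (hx : N.laplacian k x = 0)
    {y : S → ℝ} (hy : y ∈ N.complexes) (hpos : 0 < x ⟨y, hy⟩) : N.IsTerminal y := by
  refine ⟨hy, fun w hw => ?_⟩
  suffices ∃ hw : w ∈ N.complexes, 0 < x ⟨w, hw⟩ ∧ N.reach w y from this.2.2
  induction hw with
  | refl => exact ⟨hy, hpos, .refl⟩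
  | tail _ hbc ih =>
    obtain ⟨_, hb, hby⟩ := ih
    let r : N.reactions := ⟨_, hbc⟩
    exact ⟨N.mem_target _ hbc, pos_target_of_pos_source (r := r) hk hx hb,
      reach_target_of_pos_source (r := r) hk hx hb hby⟩

lemma apply_eq_zero_of_laplacian_eq_zero (hk : ∀ r, 0 < k r) (hx : N.laplacian k x = 0)
    {y : S → ℝ} (hy : N.Nonterminal y) : x ⟨y, hy.1⟩ = 0 := by
  rcases lt_trichotomy (x ⟨y, hy.1⟩) 0 with hneg | hzero | hpos
  · have hx' : N.laplacian k (-x) = 0 := by rw [map_neg, hx, neg_zero]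
    exact (hy.2 (isTerminal_of_laplacian_eq_zero hk hx' hy.1 (neg_pos.2 hneg))).elim
  · exact hzero
  · exact (hy.2 (isTerminal_of_laplacian_eq_zero hk hx hy.1 hpos)).elim

end LaplacianKernel

lemma linked_eq_eqvGen : N.linked = Relation.EqvGen N.step :=
  Relation.EqvGen.reflTransGen_symmGen N.step

lemma linkageClasses_finite : N.linkageClasses.Finite :=
  N.complexes.finite_toSet.finite_subsets.subset fun _ ⟨_, _, hL⟩ => hL ▸ fun _ hz => hz.1

lemma linkageClass_eq_of_mem {L L' : Set (S → ℝ)} (hL : L ∈ N.linkageClasses)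
    (hL' : L' ∈ N.linkageClasses) {z : S → ℝ} (hz : z ∈ L) (hz' : z ∈ L') : L = L' := by
  obtain ⟨y, -, rfl⟩ := hL
  obtain ⟨y', -, rfl⟩ := hL'
  rw [linked_eq_eqvGen] at hz hz'
  have hyy' := hz.2.trans _ _ _ (hz'.2.symm _ _)
  ext u
  simp only [Set.mem_ofPred_eq, linked_eq_eqvGen]
  exact and_congr_right fun _ => ⟨hyy'.symm _ _ |>.trans _ _ _, hyy'.trans _ _ _⟩

lemma mem_linkageClass_iff_of_step {L : Set (S → ℝ)} (hL : L ∈ N.linkageClasses)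
    {u v : S → ℝ} (huv : N.step u v) : u ∈ L ↔ v ∈ L := by
  obtain ⟨y, -, rfl⟩ := hL
  simp only [Set.mem_ofPred_eq, linked_eq_eqvGen]
  exact ⟨fun h => ⟨N.mem_target _ huv, h.2.trans _ _ _ (.rel _ _ huv)⟩,
    fun h => ⟨N.mem_source _ huv, h.2.trans _ _ _ (.symm _ _ (.rel _ _ huv))⟩⟩

noncomputable def linkageClassRep (L : N.linkageClasses) : N.complexes :=
  ⟨L.2.choose, L.2.choose_spec.1⟩

lemma linkageClassRep_mem_iff (L L' : N.linkageClasses) :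
    (N.linkageClassRep L : S → ℝ) ∈ (L' : Set (S → ℝ)) ↔ L = L' := by
  have hmem : (N.linkageClassRep L : S → ℝ) ∈ (L : Set (S → ℝ)) := by
    rw [L.2.choose_spec.2]
    exact ⟨L.2.choose_spec.1, .refl⟩
  exact ⟨fun h => Subtype.ext (N.linkageClass_eq_of_mem L.2 L'.2 hmem h), fun h => h ▸ hmem⟩

noncomputable def linkageClassSum : (N.complexes → ℝ) →ₗ[ℝ] (N.linkageClasses → ℝ) :=
  LinearMap.pi fun L =>
    ∑ z ∈ univ.filter fun z : N.complexes => (z : S → ℝ) ∈ (L : Set (S → ℝ)),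
      LinearMap.proj z

lemma linkageClassSum_single (z : N.complexes) (c : ℝ) (L : N.linkageClasses) :
    N.linkageClassSum (Pi.single z c) L =
      if (z : S → ℝ) ∈ (L : Set (S → ℝ)) then c else 0 := by
  simp [linkageClassSum, LinearMap.sum_apply, Pi.single_apply]

lemma linkageClassSum_surjective : Function.Surjective N.linkageClassSum := by
  have := N.linkageClasses_finite.fintype
  refine fun g => ⟨∑ L, Pi.single (N.linkageClassRep L) (g L), funext fun L' => ?_⟩
  simp [linkageClassSum_single, linkageClassRep_mem_iff]

lemma range_incidence_le_ker_linkageClassSum :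
    LinearMap.range N.incidence ≤ LinearMap.ker N.linkageClassSum := by
  rintro _ ⟨w, rfl⟩
  rw [LinearMap.mem_ker, incidence_apply, map_sum]
  refine sum_eq_zero fun r _ => funext fun L => ?_
  simp [linkageClassSum_single, N.mem_linkageClass_iff_of_step L.2 (N.step_source_target r)]

lemma finrank_ker_linkageClassSum_add :
    Module.finrank ℝ (LinearMap.ker N.linkageClassSum) + N.numLinkageClasses =
      N.complexes.card := by
  have := N.linkageClasses_finite.fintype
  have h := N.linkageClassSum.finrank_range_add_finrank_ker
  rw [LinearMap.range_eq_top.2 N.linkageClassSum_surjective, finrank_top,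
    Module.finrank_fintype_fun_eq_card, Module.finrank_fintype_fun_eq_card,
    Fintype.card_coe] at h
  rw [numLinkageClasses, Nat.card_eq_fintype_card]
  omega

lemma map_range_incidence : (LinearMap.range N.incidence).map N.mapY = N.stoichSubspace := by
  refine le_antisymm ?_ (Submodule.span_le.2 ?_)
  · rintro _ ⟨_, ⟨w, rfl⟩, rfl⟩
    rw [incidence_apply, map_sum]
    refine Submodule.sum_mem _ fun r _ => ?_
    rw [map_smul, map_sub, mapY_single, mapY_single]
    exact Submodule.smul_mem _ _ (Submodule.subset_span ⟨r.1, r.2, rfl⟩)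
  · rintro _ ⟨r, hr, rfl⟩
    refine ⟨N.incidence (Pi.single ⟨r, hr⟩ 1), ⟨_, rfl⟩, ?_⟩
    rw [incidence_apply, sum_eq_single ⟨r, hr⟩ (fun r' _ h => by simp [h]) (by simp)]
    simp [mapY_single, source, target]

lemma finrank_ker_mapY_inf_range_incidence_le :
    (Module.finrank ℝ ↥(LinearMap.ker N.mapY ⊓ LinearMap.range N.incidence) : ℤ) ≤
      N.deficiency := by
  have hsplit := N.mapY.finrank_map_add_finrank_ker_inf (LinearMap.range N.incidence)
  rw [map_range_incidence] at hsplit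
  have hle := Submodule.finrank_mono N.range_incidence_le_ker_linkageClassSum
  have hcard := N.finrank_ker_linkageClassSum_add
  rw [deficiency, rank]
  omega

section

variable {N}

lemma Nonterminal.mem_reactantSet {y : S → ℝ} (hy : N.Nonterminal y) :
    y ∈ N.reactantSet := by
  obtain ⟨hyc, hnt⟩ := hy
  simp only [IsTerminal, hyc, true_and, not_forall] at hnt
  obtain ⟨w, hw, hwy⟩ := hnt
  rcases hw.cases_head with rfl | ⟨z, hz, -⟩
  · exact (hwy .refl).elim
  · exact ⟨z, hz⟩

lemma IsPosEquilibrium.mapY_laplacian_eq_zero {k : N.reactions → ℝ}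
    {T : (S → ℝ) → S → ℝ} {c : S → ℝ} (hc : N.IsPosEquilibrium k T c) :
    N.mapY (N.laplacian k fun z => ∏ i, c i ^ T z i) = 0 := by
  rw [mapY_laplacian]
  exact hc.2

end

lemma linearIndependent_reactantSet (hρ : N.reactantDeficiency = 0) :
    LinearIndependent ℝ (fun z : N.reactantSet => (z : S → ℝ)) := by
  have : Fintype N.reactantSet :=
    (N.complexes.finite_toSet.subset fun _ hz => N.mem_source _ hz.choose_spec).fintype
  rw [linearIndependent_iff_card_eq_finrank_span, Subtype.range_coe, Set.finrank,
    ← Nat.card_eq_fintype_card]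
  rw [reactantDeficiency, reactantSubspace] at hρ
  omega

lemma exists_eq_mul_on_nonterminal_of_deficiency_le_one (hδ : N.deficiency ≤ 1)
    {k : N.reactions → ℝ} (hk : ∀ r, 0 < k r) {x x' : N.complexes → ℝ}
    (hx : N.mapY (N.laplacian k x) = 0) (hx' : N.mapY (N.laplacian k x') = 0)
    {y : S → ℝ} (hy : N.Nonterminal y) (hx'y : x' ⟨y, hy.1⟩ ≠ 0) :
    ∃ μ : ℝ, ∀ z (hz : N.Nonterminal z), x ⟨z, hz.1⟩ = μ * x' ⟨z, hz.1⟩ := by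
  have hK := N.finrank_ker_mapY_inf_range_incidence_le
  set K := LinearMap.ker N.mapY ⊓ LinearMap.range N.incidence
  replace hK : Module.finrank ℝ K ≤ 1 := by omega
  have mem_K : ∀ {v}, N.mapY (N.laplacian k v) = 0 → N.laplacian k v ∈ K :=
    fun hv => ⟨hv, N.laplacian_mem_range_incidence k _⟩
  have hne : N.laplacian k x' ≠ 0 := fun h => hx'y (apply_eq_zero_of_laplacian_eq_zero hk h hy)
  have hspan : Submodule.span ℝ {N.laplacian k x'} = K :=
    Submodule.eq_of_le_of_finrank_le ((Submodule.span_singleton_le_iff_mem _ _).2 (mem_K hx'))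
      (hK.trans (finrank_span_singleton hne).ge)
  obtain ⟨μ, hμ⟩ := Submodule.mem_span_singleton.1 (hspan ▸ mem_K hx)
  have hker : N.laplacian k (x - μ • x') = 0 := by rw [map_sub, map_smul, hμ, sub_self]
  refine ⟨μ, fun z hz => ?_⟩
  simpa [sub_eq_zero] using apply_eq_zero_of_laplacian_eq_zero hk hker hz

end CRN

theorem PLRLK_and_ACR_general {S : Type*} [Fintype S] (N : CRN S)
    (hδ : N.deficiency = 1)
    (k : ↥N.reactions → ℝ) (hk : ∀ r, 0 < k r)
    (T : (S → ℝ) → (S → ℝ))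
    (hρ : N.reactantDeficiency = 0)
    (j : S) (y y' : S → ℝ) (hy : N.Nonterminal y) (hy' : N.Nonterminal y')
    (hne : y ≠ y') (hdiff : ∀ i, i ≠ j → y i = y' i)
    (a : S → ℝ) (ha : ∀ i, a i ≠ 0)
    (hT : ∀ z ∈ N.reactantSet, ∀ i, T z i = a i * z i) :
    LinearIndependent ℝ (fun z : ↥N.reactantSet => T (z : S → ℝ)) ∧
    (∀ c c' : S → ℝ, N.IsPosEquilibrium k T c → N.IsPosEquilibrium k T c' →
      c j = c' j) := by
  constructor
  · have hTa : (fun z : N.reactantSet => T z) = LinearMap.mulLeft ℝ a ∘ (↑) :=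
      funext fun z => funext (hT z z.2)
    rw [hTa]
    refine (N.linearIndependent_reactantSet hρ).map' _ (LinearMap.ker_eq_bot.2 fun u v huv => ?_)
    exact funext fun i => mul_left_cancel₀ (ha i) (congrFun huv i)
  · intro c c' hc hc'
    obtain ⟨μ, hμ⟩ := N.exists_eq_mul_on_nonterminal_of_deficiency_le_one hδ.le hk
      hc.mapY_laplacian_eq_zero hc'.mapY_laplacian_eq_zero hy
      (prod_pos fun i _ => Real.rpow_pos_of_pos (hc'.1 i) _).ne'
    have hyj : y j ≠ y' j := fun h =>
      hne (funext fun i => (eq_or_ne i j).elim (· ▸ h) (hdiff i))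
    refine eq_of_prod_rpow_eq_mul_prod_rpow hc.1 hc'.1 (hμ y hy) (hμ y' hy') (j := j) ?_ ?_
    · rw [hT y hy.mem_reactantSet, hT y' hy'.mem_reactantSet]
      exact (mul_right_injective₀ (ha j)).ne hyj
    · intro i hi
      rw [hT y hy.mem_reactantSet, hT y' hy'.mem_reactantSet, hdiff i hi]

/-- Let `N` be a deficiency-one CRN which, with PL-RDK kinetics (rate constants
`k`, T-matrix `T`), admits a positive equilibrium.  Suppose the network has zero
reactant deficiency, two nonterminal complexes `y, y'` differing only in species
`j`, and the map `ŷ = T ∘ Y_res⁻¹` is diagonal with nonzero entries `a_i` (i.e.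
`T z = (a_1 z_1, …, a_m z_m)` for every reactant complex `z`).  Then the system
is PL-RLK (the columns of `T` are linearly independent) and has absolute
concentration robustness in species `j`. -/
theorem PLRLK_and_ACR {S : Type*} [Fintype S] (N : CRN S)
    (hδ : N.deficiency = 1)
    (k : ↥N.reactions → ℝ) (hk : ∀ r, 0 < k r)
    (T : (S → ℝ) → (S → ℝ))
    (hex : ∃ c, N.IsPosEquilibrium k T c)
    (hρ : N.reactantDeficiency = 0)
    (j : S) (y y' : S → ℝ) (hy : N.Nonterminal y) (hy' : N.Nonterminal y')
    (hne : y ≠ y') (hdiff : ∀ i, i ≠ j → y i = y' i)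
    (a : S → ℝ) (ha : ∀ i, a i ≠ 0)
    (hT : ∀ z ∈ N.reactantSet, ∀ i, T z i = a i * z i) :
    LinearIndependent ℝ (fun z : ↥N.reactantSet => T (z : S → ℝ)) ∧
    (∀ c c' : S → ℝ, N.IsPosEquilibrium k T c → N.IsPosEquilibrium k T c' →
      c j = c' j) :=
  PLRLK_and_ACR_general N hδ k hk T hρ j y y' hy hy' hne hdiff a ha hT
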